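/- arXiv:1703.08998 — 2 statements merged into one kernel-verified Lean document; each statement's English description precedes it below -/
import Mathlib

section
/- Let δ > 0 and let J be any interval of length 1/N^k. If I_1, …, I_r are the open intervals of length exactly δ/N^k deleted in the construction of X_{δ/N^k} (i.e., removed at the stage of the Cantor construction where the removed middle intervals have length δ/N^k), then the number of indices j with I_j ∩ J ≠ ∅ is at most 3 · 2^{log_{2N/(N-1)}⌈1/δ⌉}. -/
open Set

/-- ratio (N-1)/(2N) of each half of the middle-1/N Cantor construction -/
noncomputable def cantorRatio (N : ℕ) : ℝ := (N - 1) / (2 * N)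

/-- k-th stage C_k of the middle 1/N Cantor set -/
noncomputable def cantorStage (N : ℕ) : ℕ → Set ℝ
  | 0 => Set.Icc 0 1
  | k + 1 => (fun x => cantorRatio N * x) '' cantorStage N k ∪
      (fun x => cantorRatio N * x + (N + 1) / (2 * N)) '' cantorStage N k

/-- the middle 1/N Cantor set -/
noncomputable def middleCantorSet (N : ℕ) : Set ℝ := ⋂ k, cantorStage N k

/-- number of stages whose removed middle intervals have length at least δ -/
noncomputable def numStages (N : ℕ) (δ : ℝ) : ℕ :=
  sSup {j : ℕ | δ ≤ 1 / N * cantorRatio N ^ (j - 1)}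

/-- X_δ : perform only the removal steps removing intervals of length ≥ δ -/
noncomputable def cantorApprox (N : ℕ) (δ : ℝ) : Set ℝ := cantorStage N (numStages N δ)

/-!
Write r = (N-1)/(2N). The 2^m closed intervals of the m-th stage are indexed by binary words w
of length m (the i-th letter says which copy was kept at step i+1), and the open intervals
deleted at step m+1 are exactly their middle gaps, one per word. As the I_i are disjoint open
sets covering these connected gaps, each gap lies in a single I_i, so sending an I_i that meets J
to the interval whose gap contains a point of I_i ∩ J is injective.

Distinct stage-q intervals are at distance at least r^(q-1)/N, so J, of length 1/N^k, meets at
most two of them as long as 1/N^k ≤ r^(q-1)/N, and hence at most 2·2^(m-q) stage-m intervals.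
Taking q as large as possible, either q = m or r^q/N ≤ 1/N^k; since the deleted length is
r^m/N = δ/N^k, the latter gives δ ≤ r^(m-q), i.e. (2N/(N-1))^(m-q) ≤ 1/δ.
-/

noncomputable def cantorOffset (N : ℕ) (ε : Bool) : ℝ := if ε then (N + 1) / (2 * N) else 0

noncomputable def cantorLeft (N : ℕ) {m : ℕ} (w : Fin m → Bool) : ℝ :=
  ∑ i : Fin m, cantorOffset N (w i) * cantorRatio N ^ (i : ℕ)

noncomputable def cantorPiece (N : ℕ) {m : ℕ} (w : Fin m → Bool) : Set ℝ :=
  Icc (cantorLeft N w) (cantorLeft N w + cantorRatio N ^ m)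

noncomputable def cantorGap (N : ℕ) {m : ℕ} (w : Fin m → Bool) : Set ℝ :=
  Ioo (cantorLeft N w + cantorRatio N ^ (m + 1))
    (cantorLeft N w + cantorOffset N true * cantorRatio N ^ m)

def meetingWords (N m : ℕ) (J : Set ℝ) : Set (Fin m → Bool) :=
  {w | (cantorPiece N w ∩ J).Nonempty}

lemma cantorRatio_lt_one (N : ℕ) : cantorRatio N < 1 := by
  unfold cantorRatio
  rcases Nat.eq_zero_or_pos N with rfl | hN
  · simp
  · have : (1 : ℝ) ≤ N := by exact_mod_cast hN
    rw [div_lt_one (by positivity)]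
    linarith

section

variable {N : ℕ}

lemma cantorRatio_pos (hN : 1 < N) : 0 < cantorRatio N := by
  have : (1 : ℝ) < N := by exact_mod_cast hN
  unfold cantorRatio
  apply div_pos <;> linarith

@[simp]
lemma cantorOffset_false : cantorOffset N false = 0 := rfl

lemma cantorOffset_true (hN : N ≠ 0) : cantorOffset N true = cantorRatio N + 1 / N := by
  simp only [cantorOffset, cantorRatio, if_true]
  field_simp
  ring

lemma cantorOffset_true_add_cantorRatio (hN : N ≠ 0) :
    cantorOffset N true + cantorRatio N = 1 := by
  simp only [cantorOffset, cantorRatio, if_true]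
  field_simp
  ring

lemma cantorOffset_nonneg (ε : Bool) : 0 ≤ cantorOffset N ε := by
  cases ε
  · exact le_rfl
  · unfold cantorOffset; positivity

lemma cantorOffset_add_cantorRatio_le (hN : N ≠ 0) (ε : Bool) :
    cantorOffset N ε + cantorRatio N ≤ 1 := by
  cases ε
  · simpa using (cantorRatio_lt_one N).le
  · exact (cantorOffset_true_add_cantorRatio hN).le

lemma cantorLeft_cons (ε : Bool) {m : ℕ} (v : Fin m → Bool) :
    cantorLeft N (Fin.cons ε v) = cantorRatio N * cantorLeft N v + cantorOffset N ε := by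
  simp only [cantorLeft, Fin.sum_univ_succ, Fin.cons_zero, Fin.cons_succ, Fin.val_succ,
    Finset.mul_sum, pow_succ, Fin.val_zero, pow_zero, mul_one]
  rw [add_comm]
  congr 1
  exact Finset.sum_congr rfl fun i _ => by ring

lemma cantorLeft_snoc {m : ℕ} (w : Fin m → Bool) (ε : Bool) :
    cantorLeft N (Fin.snoc w ε) = cantorLeft N w + cantorOffset N ε * cantorRatio N ^ m := by
  simp only [cantorLeft, Fin.sum_univ_castSucc, Fin.snoc_castSucc, Fin.snoc_last,
    Fin.val_castSucc, Fin.val_last]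

lemma cantorPiece_cons (hN : 1 < N) (ε : Bool) {m : ℕ} (v : Fin m → Bool) :
    cantorPiece N (Fin.cons ε v) =
      (fun x => cantorRatio N * x + cantorOffset N ε) '' cantorPiece N v := by
  rw [cantorPiece, cantorPiece, image_affine_Icc' (cantorRatio_pos hN), cantorLeft_cons, pow_succ]
  congr 1
  ring

lemma cantorPiece_subset_Icc (hN : 1 < N) {m : ℕ} (w : Fin m → Bool) :
    cantorPiece N w ⊆ Icc 0 1 := by
  induction m with
  | zero => simp [cantorPiece, cantorLeft]
  | succ m ih =>
    rw [← Fin.cons_self_tail w, cantorPiece_cons hN]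
    rintro _ ⟨x, hx, rfl⟩
    obtain ⟨hx0, hx1⟩ := ih (Fin.tail w) hx
    have hr := cantorRatio_pos hN
    have := cantorOffset_nonneg (N := N) (w 0)
    have := cantorOffset_add_cantorRatio_le (by omega : N ≠ 0) (w 0)
    constructor <;> nlinarith

lemma cantorStage_eq_iUnion (hN : 1 < N) (m : ℕ) :
    cantorStage N m = ⋃ w : Fin m → Bool, cantorPiece N w := by
  induction m with
  | zero => simp [cantorStage, cantorPiece, cantorLeft, iUnion_const]
  | succ m ih =>
    have hsplit : ⋃ w : Fin (m + 1) → Bool, cantorPiece N w =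
        ⋃ (ε : Bool) (v : Fin m → Bool),
          cantorPiece N (Fin.cons ε v : Fin (m + 1) → Bool) := by
      rw [← (Fin.consEquiv fun _ => Bool).surjective.iUnion_comp, iUnion_prod']
      rfl
    rw [hsplit]
    simp only [cantorPiece_cons hN, ← image_iUnion, ← ih]
    rw [cantorStage, union_comm, union_eq_iUnion]
    congr 1
    funext ε
    cases ε <;> simp [cantorOffset]

lemma cantorPiece_subset_head (hN : 1 < N) {m : ℕ} (w : Fin (m + 1) → Bool) :
    cantorPiece N w ⊆ Icc (cantorOffset N (w 0)) (cantorOffset N (w 0) + cantorRatio N) := by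
  rw [← Fin.cons_self_tail w, cantorPiece_cons hN]
  rintro _ ⟨x, hx, rfl⟩
  obtain ⟨hx0, hx1⟩ := cantorPiece_subset_Icc hN _ hx
  have hr := cantorRatio_pos hN
  constructor <;> simp only [Fin.cons_zero] <;> nlinarith

lemma one_div_le_abs_sub_of_head_ne (hN : 1 < N) {m : ℕ} {w w' : Fin (m + 1) → Bool}
    (h0 : w 0 ≠ w' 0) {x y : ℝ} (hx : x ∈ cantorPiece N w) (hy : y ∈ cantorPiece N w') :
    1 / N ≤ |x - y| := by
  have hb := cantorOffset_true (by omega : N ≠ 0)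
  obtain ⟨hx0, hx1⟩ := cantorPiece_subset_head hN w hx
  obtain ⟨hy0, hy1⟩ := cantorPiece_subset_head hN w' hy
  cases hw : w 0 <;> cases hw' : w' 0 <;>
    simp only [hw, hw', cantorOffset_false, hb, ne_eq, not_true_eq_false] at h0 hx0 hx1 hy0 hy1
  · linarith [neg_abs_le (x - y)]
  · linarith [le_abs_self (x - y)]

lemma cantorRatio_pow_div_le_abs_sub (hN : 1 < N) {m : ℕ} {w w' : Fin (m + 1) → Bool}
    (hne : w ≠ w') {x y : ℝ} (hx : x ∈ cantorPiece N w) (hy : y ∈ cantorPiece N w') :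
    cantorRatio N ^ m / N ≤ |x - y| := by
  induction m generalizing x y with
  | zero =>
    have h0 : w 0 ≠ w' 0 := fun h => hne (funext (Fin.forall_fin_one.2 h))
    simpa using one_div_le_abs_sub_of_head_ne hN h0 hx hy
  | succ m ih =>
    by_cases h0 : w 0 = w' 0
    · have htail : Fin.tail w ≠ Fin.tail w' := fun h =>
        hne (by rw [← Fin.cons_self_tail w, ← Fin.cons_self_tail w', h0, h])
      rw [← Fin.cons_self_tail w, cantorPiece_cons hN] at hx
      rw [← Fin.cons_self_tail w', cantorPiece_cons hN, ← h0] at hy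
      obtain ⟨x, hx, rfl⟩ := hx
      obtain ⟨y, hy, rfl⟩ := hy
      have hr := cantorRatio_pos hN
      calc cantorRatio N ^ (m + 1) / N = cantorRatio N * (cantorRatio N ^ m / N) := by ring
        _ ≤ cantorRatio N * |x - y| := by gcongr; exact ih htail hx hy
        _ = _ := by rw [add_sub_add_right_eq_sub, ← mul_sub, abs_mul, abs_of_pos hr]
    · refine le_trans ?_ (one_div_le_abs_sub_of_head_ne hN h0 hx hy)
      gcongr
      exact pow_le_one₀ (cantorRatio_pos hN).le (cantorRatio_lt_one N).le

lemma cantorPiece_snoc_false {m : ℕ} (w : Fin m → Bool) :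
    cantorPiece N (Fin.snoc w false) =
      Icc (cantorLeft N w) (cantorLeft N w + cantorRatio N ^ (m + 1)) := by
  simp [cantorPiece, cantorLeft_snoc]

lemma cantorPiece_snoc_true (hN : N ≠ 0) {m : ℕ} (w : Fin m → Bool) :
    cantorPiece N (Fin.snoc w true) =
      Icc (cantorLeft N w + cantorOffset N true * cantorRatio N ^ m)
        (cantorLeft N w + cantorRatio N ^ m) := by
  rw [cantorPiece, cantorLeft_snoc, pow_succ]
  congr 1
  linear_combination cantorRatio N ^ m * cantorOffset_true_add_cantorRatio hN

lemma cantorPiece_snoc_subset (hN : 1 < N) {m : ℕ} (w : Fin m → Bool) (ε : Bool) :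
    cantorPiece N (Fin.snoc w ε) ⊆ cantorPiece N w := by
  have hr := cantorRatio_pos hN
  have hrm := pow_pos hr m
  cases ε
  · rw [cantorPiece_snoc_false, pow_succ]
    exact Icc_subset_Icc le_rfl (by nlinarith [cantorRatio_lt_one N])
  · rw [cantorPiece_snoc_true (by omega)]
    exact Icc_subset_Icc (by nlinarith [cantorOffset_nonneg (N := N) true]) le_rfl

lemma cantorGap_subset_cantorPiece (hN : 1 < N) {m : ℕ} (w : Fin m → Bool) :
    cantorGap N w ⊆ cantorPiece N w := by
  have hr := cantorRatio_pos hN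
  rintro x ⟨hx1, hx2⟩
  constructor
  · nlinarith [pow_pos hr (m + 1)]
  · nlinarith [cantorOffset_add_cantorRatio_le (by omega : N ≠ 0) true, pow_pos hr m]

lemma cantorStage_diff_eq_iUnion_cantorGap (hN : 1 < N) (m : ℕ) :
    cantorStage N m \ cantorStage N (m + 1) = ⋃ w : Fin m → Bool, cantorGap N w := by
  have hN0 : N ≠ 0 := by omega
  have hr := cantorRatio_pos hN
  simp only [cantorStage_eq_iUnion hN]
  ext x
  simp only [mem_sdiff, mem_iUnion, not_exists]
  constructor
  · rintro ⟨⟨w, hxw⟩, hx⟩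
    have hfalse := hx (Fin.snoc w false)
    have htrue := hx (Fin.snoc w true)
    rw [cantorPiece_snoc_false, mem_Icc, not_and_or, not_le, not_le] at hfalse
    rw [cantorPiece_snoc_true hN0, mem_Icc, not_and_or, not_le, not_le] at htrue
    rw [cantorPiece, mem_Icc] at hxw
    refine ⟨w, ?_, ?_⟩
    · rcases hfalse with h | h <;> linarith
    · rcases htrue with h | h <;> linarith
  · rintro ⟨w, hxw⟩
    refine ⟨⟨w, cantorGap_subset_cantorPiece hN w hxw⟩, fun u hu => ?_⟩
    obtain ⟨hx1, hx2⟩ := hxw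
    by_cases hu0 : u = Fin.snoc w false
    · rw [hu0, cantorPiece_snoc_false] at hu
      exact absurd hu.2 (not_le.2 hx1)
    · -- x lies within r^m/N of the right end of the piece of `Fin.snoc w false`
      have hend :
          cantorLeft N w + cantorRatio N ^ (m + 1) ∈ cantorPiece N (Fin.snoc w false) := by
        rw [cantorPiece_snoc_false]
        exact right_mem_Icc.2 (by nlinarith [pow_pos hr (m + 1)])
      have hsep := cantorRatio_pow_div_le_abs_sub hN hu0 hu hend
      have hlen : cantorOffset N true * cantorRatio N ^ m - cantorRatio N ^ (m + 1) =
          cantorRatio N ^ m / N := by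
        rw [cantorOffset_true hN0, pow_succ]; ring
      rw [abs_of_pos (by linarith)] at hsep
      linarith

end

lemma eq_of_isPreconnected_subset_iUnion {X ι : Type*} [TopologicalSpace X] {U : ι → Set X}
    (hU : ∀ i, IsOpen (U i)) (hdisj : Pairwise (Function.onFun Disjoint U)) {s : Set X}
    (hs : IsPreconnected s) (hsU : s ⊆ ⋃ i, U i) {i j : ι}
    (hi : (s ∩ U i).Nonempty) (hj : (s ∩ U j).Nonempty) : i = j := by
  by_contra hij
  have hcover : s ⊆ U i ∪ ⋃ (l) (_ : l ≠ i), U l := by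
    intro x hx
    obtain ⟨l, hl⟩ := mem_iUnion.1 (hsU hx)
    by_cases h : l = i
    · exact Or.inl (h ▸ hl)
    · exact Or.inr (mem_iUnion₂_of_mem h hl)
  have hsub := hs.subset_left_of_subset_union (hU i)
    (isOpen_iUnion fun l => isOpen_iUnion fun _ => hU l)
    (disjoint_iUnion₂_right.2 fun _ hl => hdisj (Ne.symm hl)) hcover hi
  obtain ⟨x, hxs, hxj⟩ := hj
  exact (hdisj hij).ne_of_mem (hsub hxs) hxj rfl

section

variable {N : ℕ}

lemma card_removed_le_card_meetingWords (hN : 1 < N) {m : ℕ} {ι : Type*} {I : ι → Set ℝ}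
    (hI : ∀ i, IsOpen (I i)) (hdisj : Pairwise (Function.onFun Disjoint I))
    (hrem : ⋃ i, I i = cantorStage N m \ cantorStage N (m + 1)) (J : Set ℝ) :
    Nat.card {i // (I i ∩ J).Nonempty} ≤ Nat.card (meetingWords N m J) := by
  rw [cantorStage_diff_eq_iUnion_cantorGap hN] at hrem
  have hword (i : {i // (I i ∩ J).Nonempty}) :
      ∃ w : Fin m → Bool, (cantorGap N w ∩ (I i ∩ J)).Nonempty := by
    obtain ⟨i, x, hxI, hxJ⟩ := i
    obtain ⟨w, hxw⟩ := mem_iUnion.1 (hrem ▸ mem_iUnion_of_mem i hxI)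
    exact ⟨w, x, hxw, hxI, hxJ⟩
  choose word hword using hword
  refine Nat.card_le_card_of_injective (fun i => ⟨word i, ?_⟩) fun i i' h => Subtype.ext ?_
  · obtain ⟨x, hxw, -, hxJ⟩ := hword i
    exact ⟨x, cantorGap_subset_cantorPiece hN _ hxw, hxJ⟩
  · have hw : word i = word i' := congrArg Subtype.val h
    obtain ⟨x, hxw, hxI, -⟩ := hword i
    obtain ⟨x', hxw', hxI', -⟩ := hword i'
    rw [← hw] at hxw'
    exact eq_of_isPreconnected_subset_iUnion hI hdisj isPreconnected_Ioo
      (hrem ▸ subset_iUnion (cantorGap N) (word i)) ⟨x, hxw, hxI⟩ ⟨x', hxw', hxI'⟩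

lemma card_meetingWords_succ_le (hN : 1 < N) (m : ℕ) (J : Set ℝ) :
    Nat.card (meetingWords N (m + 1) J) ≤ 2 * Nat.card (meetingWords N m J) := by
  have hinit (w : Fin (m + 1) → Bool) : cantorPiece N w ⊆ cantorPiece N (Fin.init w) := by
    simpa only [Fin.snoc_init_self] using cantorPiece_snoc_subset hN (Fin.init w) (w (Fin.last m))
  rw [mul_comm, ← Fintype.card_bool, ← Nat.card_eq_fintype_card, ← Nat.card_prod]
  refine Nat.card_le_card_of_injective
    (fun w => (⟨Fin.init w.1, w.2.mono (inter_subset_inter_left J (hinit w.1))⟩,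
      w.1 (Fin.last m)))
    fun w w' h => Subtype.ext ?_
  obtain ⟨hinit', hlast⟩ := Prod.mk.inj h
  rw [← Fin.snoc_init_self w.1, ← Fin.snoc_init_self w'.1, hlast,
    show Fin.init w.1 = Fin.init w'.1 from congrArg Subtype.val hinit']

lemma card_meetingWords_le_pow_mul (hN : 1 < N) {q m : ℕ} (hqm : q ≤ m) (J : Set ℝ) :
    Nat.card (meetingWords N m J) ≤ 2 ^ (m - q) * Nat.card (meetingWords N q J) := by
  induction m, hqm using Nat.le_induction with
  | base => simp
  | succ m hqm ih =>
    calc _ ≤ 2 * Nat.card (meetingWords N m J) := card_meetingWords_succ_le hN m J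
      _ ≤ 2 * (2 ^ (m - q) * _) := by gcongr
      _ = 2 ^ (m + 1 - q) * _ := by rw [← mul_assoc, ← pow_succ', Nat.sub_add_comm hqm]

lemma card_meetingWords_le_two (hN : 1 < N) {p : ℕ} {a L : ℝ}
    (hL : L ≤ cantorRatio N ^ p / N) :
    Nat.card (meetingWords N (p + 1) (Icc a (a + L))) ≤ 2 := by
  classical
  rw [Nat.card_eq_fintype_card]
  by_contra! h
  obtain ⟨⟨u, x, hxu, hx⟩, ⟨v, y, hyv, hy⟩, ⟨w, z, hzw, hz⟩, huv, huw, hvw⟩ :=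
    Fintype.two_lt_card_iff.1 h
  have hg : 0 < cantorRatio N ^ p / N := by
    have := cantorRatio_pos hN
    positivity
  have hxy := cantorRatio_pow_div_le_abs_sub hN (fun h => huv (Subtype.ext h)) hxu hyv
  have hxz := cantorRatio_pow_div_le_abs_sub hN (fun h => huw (Subtype.ext h)) hxu hzw
  have hyz := cantorRatio_pow_div_le_abs_sub hN (fun h => hvw (Subtype.ext h)) hyv hzw
  obtain ⟨hx0, hx1⟩ := hx
  obtain ⟨hy0, hy1⟩ := hy
  obtain ⟨hz0, hz1⟩ := hz
  rcases le_abs'.1 hxy with h1 | h1 <;> rcases le_abs'.1 hxz with h2 | h2 <;>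
    rcases le_abs'.1 hyz with h3 | h3 <;> linarith

lemma card_meetingWords_le (hN : 1 < N) {q m : ℕ} (hqm : q ≤ m) {a L : ℝ}
    (hL : q = 0 ∨ L ≤ cantorRatio N ^ (q - 1) / N) :
    Nat.card (meetingWords N m (Icc a (a + L))) ≤ 2 * 2 ^ (m - q) := by
  refine (card_meetingWords_le_pow_mul hN hqm _).trans ?_
  rw [mul_comm 2]
  gcongr
  cases q with
  | zero => exact (Finite.card_le_one_iff_subsingleton.2 inferInstance).trans one_le_two
  | succ p => exact card_meetingWords_le_two hN (hL.resolve_left p.succ_ne_zero)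

end

lemma exists_crossing_index {α : Type*} [LinearOrder α] (f : ℕ → α) (c : α) (m : ℕ) :
    ∃ q ≤ m, (q = 0 ∨ c ≤ f (q - 1)) ∧ (q = m ∨ f q ≤ c) := by
  induction m with
  | zero => exact ⟨0, le_rfl, Or.inl rfl, Or.inl rfl⟩
  | succ m ih =>
    obtain ⟨q, hqm, hlow, hq | hq⟩ := ih
    · rcases le_or_gt (f q) c with hfq | hfq
      · exact ⟨q, by omega, hlow, Or.inr hfq⟩
      · exact ⟨q + 1, by omega, Or.inr (by simpa [hq] using hfq.le), Or.inl (by omega)⟩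
    · exact ⟨q, by omega, hlow, Or.inr hq⟩

lemma two_pow_le_rpow_logb {t M : ℝ} (ht : 1 < t) {e : ℕ} (h : t ^ e ≤ M) :
    (2 : ℝ) ^ e ≤ 2 ^ Real.logb t M := by
  have he : (e : ℝ) ≤ Real.logb t M :=
    (Real.le_logb_iff_rpow_le ht ((pow_pos (by linarith) e).trans_le h)).2
      (by rwa [Real.rpow_natCast])
  rw [← Real.rpow_natCast]
  exact Real.rpow_le_rpow_of_exponent_le one_le_two he

lemma inv_cantorRatio_pow_le_ceil_one_div {N : ℕ} (hN : 1 < N) {δ L : ℝ} (hδ : 0 < δ)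
    (hL : 0 < L) {q m : ℕ} (hqm : q ≤ m) (hlen : 1 / N * cantorRatio N ^ m = δ * L)
    (hq : q = m ∨ cantorRatio N ^ q / N ≤ L) :
    (cantorRatio N)⁻¹ ^ (m - q) ≤ (⌈1 / δ⌉₊ : ℝ) := by
  rcases hq with rfl | hq
  · simpa using Nat.one_le_ceil_iff.2 (by positivity)
  have hr := cantorRatio_pos hN
  have hδr : δ ≤ cantorRatio N ^ (m - q) := by
    refine le_of_mul_le_mul_right ?_ hL
    calc δ * L = cantorRatio N ^ (m - q) * (cantorRatio N ^ q / N) := by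
          rw [← hlen, ← Nat.sub_add_cancel hqm, pow_add, Nat.add_sub_cancel]
          ring
      _ ≤ cantorRatio N ^ (m - q) * L := by gcongr
  rw [inv_pow, ← one_div]
  exact (one_div_le_one_div_of_le hδ hδr).trans (Nat.le_ceil _)

theorem stmt4 (N : ℕ) (hN : 3 ≤ N) (k : ℕ) (δ : ℝ) (hδ : 0 < δ)
    (j : ℕ) (hj : 1 ≤ j) (hlen : 1 / N * cantorRatio N ^ (j - 1) = δ / N ^ k)
    (n : ℕ) (I : Fin n → Set ℝ)
    (hopen : ∀ i, ∃ p q : ℝ, p < q ∧ I i = Set.Ioo p q)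
    (hdisj : Pairwise (Function.onFun Disjoint I))
    (hrem : (⋃ i, I i) = cantorStage N (j - 1) \ cantorStage N j)
    (a : ℝ) :
    (Nat.card {i : Fin n // (I i ∩ Set.Icc a (a + 1 / N ^ k)).Nonempty} : ℝ) ≤
      3 * (2 : ℝ) ^ Real.logb (2 * N / (N - 1)) (⌈1 / δ⌉₊ : ℝ) := by
  obtain ⟨m, rfl⟩ : ∃ m, j = m + 1 := ⟨j - 1, by omega⟩
  rw [Nat.add_sub_cancel] at hlen hrem
  have hN1 : 1 < N := by omega
  have hr := cantorRatio_pos hN1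
  have hI (i : Fin n) : IsOpen (I i) := by
    obtain ⟨p, p', -, h⟩ := hopen i
    exact h ▸ isOpen_Ioo
  set L : ℝ := 1 / N ^ k
  obtain ⟨q, hqm, hgap, hq⟩ := exists_crossing_index (fun i => cantorRatio N ^ i / N) L m
  have hcount := (card_removed_le_card_meetingWords hN1 hI hdisj hrem _).trans
    (card_meetingWords_le hN1 hqm (a := a) hgap)
  have hlevel := inv_cantorRatio_pow_le_ceil_one_div hN1 hδ (by positivity) hqm
    (by rw [hlen, div_eq_mul_one_div]) hq
  calc (Nat.card {i : Fin n // (I i ∩ Set.Icc a (a + L)).Nonempty} : ℝ)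
      ≤ 2 * 2 ^ (m - q) := by exact_mod_cast hcount
    _ ≤ 3 * 2 ^ (m - q) := by gcongr; norm_num
    _ ≤ _ := by
      rw [← show (cantorRatio N)⁻¹ = 2 * N / (N - 1) from inv_div _ _]
      gcongr
      exact two_pow_le_rpow_logb ((one_lt_inv₀ hr).2 (cantorRatio_lt_one N)) hlevel
end

section
/- For N sufficiently large, the middle 1/N-th Cantor set X contains a 3-term arithmetic progression: there exist x ∈ ℝ and d > 0 with x, x+d, x+2d ∈ X. -/
open Set

/-! With `r = cantorRatio N`, the middle-`1/N` Cantor set contains every point `(1 - r) ∑ εᵢ rⁱ`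
with binary digits `εᵢ` and is mapped into itself by `x ↦ r x` and `x ↦ r x + (1 - r)`.
For `r ≥ 1/3` a greedy algorithm writes `-1/r = ∑ cₖ rᵏ` with digits `cₖ ∈ {-2, …, 2}`.
Splitting each digit as `c = u + w - 2 v` with bits `u, v, w` gives three Cantor points
`U, V, W` with `U + W - 2 V = -(1 - r) / r`, so that `r W`, `r V`, `r U + (1 - r)` is an
arithmetic progression; its common difference is positive because `r V ≤ r < 1 - r`. -/

open Filter Topology

section GreedyDigits

noncomputable def clampDigit (x : ℝ) : ℤ := max (-2) (min 2 (round x))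

lemma clampDigit_mem_Icc (x : ℝ) : clampDigit x ∈ Icc (-2) 2 :=
  ⟨le_max_left _ _, max_le (by norm_num) (min_le_left _ _)⟩

lemma abs_sub_clampDigit_le (x : ℝ) : |x - clampDigit x| ≤ max (1 / 2) (|x| - 2) := by
  have hround := abs_sub_round x
  have hx := abs_le.1 hround
  rcases le_or_gt 3 (round x) with h3 | h3
  · have hc : clampDigit x = 2 := by simp [clampDigit, min_eq_left (by omega : (2:ℤ) ≤ round x)]
    have : (3:ℝ) ≤ round x := by exact_mod_cast h3
    rw [hc, abs_of_nonneg (by push_cast; linarith), abs_of_nonneg (by linarith)]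
    exact le_max_of_le_right (by push_cast; linarith)
  rcases le_or_gt (round x) (-3) with h3' | h3'
  · have hc : clampDigit x = -2 := by
      rw [clampDigit, min_eq_right (by omega), max_eq_left (by omega)]
    have : (round x : ℝ) ≤ -3 := by exact_mod_cast h3'
    rw [hc, abs_of_nonpos (by push_cast; linarith), abs_of_nonpos (by linarith)]
    exact le_max_of_le_right (by push_cast; linarith)
  have hc : clampDigit x = round x := by
    rw [clampDigit, min_eq_right (by omega), max_eq_right (by omega)]
  rw [hc]
  exact le_max_of_le_left hround

/-- Remainders of the greedy base-`r` expansion of `s` whose `k`-th digit is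
`clampDigit (greedyRemainder r s k)`. -/
noncomputable def greedyRemainder (r s : ℝ) : ℕ → ℝ
  | 0 => s
  | k + 1 => (greedyRemainder r s k - clampDigit (greedyRemainder r s k)) / r

variable {r s : ℝ}

lemma abs_greedyRemainder_le (hr : 1 / 5 ≤ r) (hr1 : r < 1) (hs : |s| ≤ 2 / (1 - r)) (k : ℕ) :
    |greedyRemainder r s k| ≤ 2 / (1 - r) := by
  induction k with
  | zero => exact hs
  | succ k ih =>
    have hr0 : 0 < r := by linarith
    have h1r : 0 < 1 - r := by linarith
    -- `1 / 5 ≤ r` is exactly what makes the rounding error `1 / 2` fit into `r * (2 / (1 - r))`.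
    have hdigit : max (1 / 2) (|greedyRemainder r s k| - 2) ≤ 2 / (1 - r) * r := by
      have hhalf : 1 / 2 ≤ 2 / (1 - r) * r := by
        rw [div_mul_eq_mul_div, le_div_iff₀ h1r]; linarith
      have htop : 2 / (1 - r) - 2 = 2 / (1 - r) * r := by field_simp; ring
      exact max_le hhalf (by linarith)
    rw [greedyRemainder, abs_div, abs_of_pos hr0, div_le_iff₀ hr0]
    exact (abs_sub_clampDigit_le _).trans hdigit

lemma sum_clampDigit_greedyRemainder (hr : r ≠ 0) (n : ℕ) :
    ∑ k ∈ Finset.range n, (clampDigit (greedyRemainder r s k) : ℝ) * r ^ k =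
      s - greedyRemainder r s n * r ^ n := by
  induction n with
  | zero => simp [greedyRemainder]
  | succ n ih =>
    rw [Finset.sum_range_succ, ih, greedyRemainder]
    field_simp
    ring

theorem exists_hasSum_digits_mul_pow (hr : 1 / 5 ≤ r) (hr1 : r < 1) (hs : |s| ≤ 2 / (1 - r)) :
    ∃ c : ℕ → ℤ, (∀ k, c k ∈ Icc (-2) 2) ∧ HasSum (fun k => (c k : ℝ) * r ^ k) s := by
  have hr0 : 0 < r := by linarith
  refine ⟨fun k => clampDigit (greedyRemainder r s k), fun k => clampDigit_mem_Icc _, ?_⟩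
  have hsummable : Summable fun k => (clampDigit (greedyRemainder r s k) : ℝ) * r ^ k := by
    refine Summable.of_norm_bounded ((summable_geometric_of_lt_one hr0.le hr1).mul_left 2)
      fun k => ?_
    have hc := clampDigit_mem_Icc (greedyRemainder r s k)
    have hc' : |(clampDigit (greedyRemainder r s k) : ℝ)| ≤ 2 := by
      rw [abs_le]; exact ⟨by exact_mod_cast hc.1, by exact_mod_cast hc.2⟩
    rw [Real.norm_eq_abs, abs_mul, abs_of_pos (pow_pos hr0 k)]
    exact mul_le_mul_of_nonneg_right hc' (pow_nonneg hr0.le k)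
  have htail : Tendsto (fun n => greedyRemainder r s n * r ^ n) atTop (𝓝 0) := by
    refine squeeze_zero_norm (fun n => ?_) (by
      simpa using (tendsto_pow_atTop_nhds_zero_of_lt_one hr0.le hr1).const_mul (2 / (1 - r)))
    rw [Real.norm_eq_abs, abs_mul, abs_of_pos (pow_pos hr0 n)]
    exact mul_le_mul_of_nonneg_right (abs_greedyRemainder_le hr hr1 hs n) (pow_nonneg hr0.le n)
  rw [hsummable.hasSum_iff_tendsto_nat]
  simp_rw [sum_clampDigit_greedyRemainder hr0.ne']
  simpa using htail.const_sub s

end GreedyDigits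

section BinaryPoints

/-- For binary digits `ε` these are the points of the Cantor set of ratio `r`. -/
noncomputable def binaryPoint (r : ℝ) (ε : ℕ → ℝ) : ℝ := (1 - r) * ∑' i, ε i * r ^ i

variable {r : ℝ} {ε : ℕ → ℝ}

lemma summable_mul_pow_of_mem_Icc (hr0 : 0 ≤ r) (hr1 : r < 1) (hε : ∀ i, ε i ∈ Icc 0 1) :
    Summable fun i => ε i * r ^ i :=
  (summable_geometric_of_lt_one hr0 hr1).of_nonneg_of_le
    (fun i => mul_nonneg (hε i).1 (pow_nonneg hr0 i))
    (fun i => mul_le_of_le_one_left (pow_nonneg hr0 i) (hε i).2)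

lemma binaryPoint_mem_Icc (hr0 : 0 ≤ r) (hr1 : r < 1) (hε : ∀ i, ε i ∈ Icc 0 1) :
    binaryPoint r ε ∈ Icc 0 1 := by
  have h1r : 0 < 1 - r := by linarith
  have hle : ∑' i, ε i * r ^ i ≤ (1 - r)⁻¹ := by
    rw [← tsum_geometric_of_lt_one hr0 hr1]
    exact (summable_mul_pow_of_mem_Icc hr0 hr1 hε).tsum_le_tsum
      (fun i => mul_le_of_le_one_left (pow_nonneg hr0 i) (hε i).2)
      (summable_geometric_of_lt_one hr0 hr1)
  refine ⟨mul_nonneg h1r.le (tsum_nonneg fun i => mul_nonneg (hε i).1 (pow_nonneg hr0 i)), ?_⟩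
  calc binaryPoint r ε ≤ (1 - r) * (1 - r)⁻¹ := mul_le_mul_of_nonneg_left hle h1r.le
    _ = 1 := mul_inv_cancel₀ h1r.ne'

lemma binaryPoint_eq_head_add_tail (hr0 : 0 ≤ r) (hr1 : r < 1) (hε : ∀ i, ε i ∈ Icc 0 1) :
    binaryPoint r ε = ε 0 * (1 - r) + r * binaryPoint r fun i => ε (i + 1) := by
  have htail : ∑' i, ε (i + 1) * r ^ (i + 1) = r * ∑' i, ε (i + 1) * r ^ i := by
    rw [← tsum_mul_left]
    congr 1 with i
    ring
  rw [binaryPoint, (summable_mul_pow_of_mem_Icc hr0 hr1 hε).tsum_eq_zero_add, htail, binaryPoint]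
  ring

lemma binaryPoint_add_sub_two_mul {s : ℝ} {u v w : ℕ → ℝ} (hr0 : 0 ≤ r) (hr1 : r < 1)
    (hu : ∀ i, u i ∈ Icc 0 1) (hv : ∀ i, v i ∈ Icc 0 1) (hw : ∀ i, w i ∈ Icc 0 1)
    (hs : HasSum (fun i => (u i + w i - 2 * v i) * r ^ i) s) :
    binaryPoint r u + binaryPoint r w - 2 * binaryPoint r v = (1 - r) * s := by
  have hsum := ((summable_mul_pow_of_mem_Icc hr0 hr1 hu).hasSum.add
    (summable_mul_pow_of_mem_Icc hr0 hr1 hw).hasSum).sub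
    ((summable_mul_pow_of_mem_Icc hr0 hr1 hv).hasSum.mul_left 2)
  have hs' : HasSum (fun i => u i * r ^ i + w i * r ^ i - 2 * (v i * r ^ i)) s := by
    convert hs using 2 with i; ring
  rw [binaryPoint, binaryPoint, binaryPoint, ← hsum.unique hs']
  ring

end BinaryPoints

lemma exists_bits_add_sub_two_mul_eq {c : ℤ} (hc : c ∈ Icc (-2) 2) :
    ∃ u v w : ℝ, u ∈ ({0, 1} : Set ℝ) ∧ v ∈ ({0, 1} : Set ℝ) ∧ w ∈ ({0, 1} : Set ℝ) ∧
      u + w - 2 * v = c := by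
  obtain ⟨hc₁, hc₂⟩ := hc
  interval_cases c
  · exact ⟨0, 1, 0, by norm_num⟩
  · exact ⟨0, 1, 1, by norm_num⟩
  · exact ⟨0, 0, 0, by norm_num⟩
  · exact ⟨1, 0, 0, by norm_num⟩
  · exact ⟨1, 0, 1, by norm_num⟩

lemma forall_mem_Icc_of_forall_mem_pair {ε : ℕ → ℝ} (hε : ∀ i, ε i ∈ ({0, 1} : Set ℝ)) :
    ∀ i, ε i ∈ Icc 0 1 := fun i => by
  rcases hε i with h | h <;> rw [h] <;> norm_num

section MiddleCantorSet

variable {N : ℕ}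

lemma cantorRatio_nonneg (N : ℕ) : 0 ≤ cantorRatio N := by
  rcases N with _ | N
  · simp [cantorRatio]
  · exact div_nonneg (by push_cast; linarith) (by positivity)

lemma cantorRatio_lt_half (N : ℕ) : cantorRatio N < 1 / 2 := by
  rcases N with _ | N
  · simp [cantorRatio]
  · unfold cantorRatio
    rw [div_lt_iff₀ (by positivity)]
    push_cast; linarith

lemma one_third_le_cantorRatio (hN : 3 ≤ N) : 1 / 3 ≤ cantorRatio N := by
  have hN' : (3 : ℝ) ≤ N := by exact_mod_cast hN
  unfold cantorRatio
  rw [le_div_iff₀ (by positivity)]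
  linarith

lemma right_offset_eq_one_sub_cantorRatio (hN : N ≠ 0) :
    ((N : ℝ) + 1) / (2 * N) = 1 - cantorRatio N := by
  have : (N : ℝ) ≠ 0 := by exact_mod_cast hN
  unfold cantorRatio
  field_simp
  ring

lemma binaryPoint_mem_cantorStage (hN : N ≠ 0) (k : ℕ) :
    ∀ ε : ℕ → ℝ, (∀ i, ε i ∈ ({0, 1} : Set ℝ)) →
      binaryPoint (cantorRatio N) ε ∈ cantorStage N k := by
  have hr0 := cantorRatio_nonneg N
  have hr1 : cantorRatio N < 1 := (cantorRatio_lt_half N).trans (by norm_num)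
  induction k with
  | zero => exact fun ε hε => binaryPoint_mem_Icc hr0 hr1 (forall_mem_Icc_of_forall_mem_pair hε)
  | succ k ih =>
    intro ε hε
    have htail := ih _ fun i => hε (i + 1)
    rw [binaryPoint_eq_head_add_tail hr0 hr1 (forall_mem_Icc_of_forall_mem_pair hε)]
    rcases hε 0 with h0 | h0
    · exact Or.inl ⟨_, htail, by rw [h0]; ring⟩
    · refine Or.inr ⟨_, htail, ?_⟩
      rw [h0, right_offset_eq_one_sub_cantorRatio hN]
      ring

lemma binaryPoint_mem_middleCantorSet (hN : N ≠ 0) {ε : ℕ → ℝ}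
    (hε : ∀ i, ε i ∈ ({0, 1} : Set ℝ)) : binaryPoint (cantorRatio N) ε ∈ middleCantorSet N :=
  mem_iInter.2 fun k => binaryPoint_mem_cantorStage hN k ε hε

lemma cantorRatio_mul_mem_middleCantorSet {x : ℝ} (hx : x ∈ middleCantorSet N) :
    cantorRatio N * x ∈ middleCantorSet N := by
  refine mem_iInter.2 fun k => ?_
  rcases k with _ | k
  · obtain ⟨hx₀, hx₁⟩ : x ∈ Icc 0 1 := mem_iInter.1 hx 0
    have hr0 := cantorRatio_nonneg N
    have hr1 := cantorRatio_lt_half N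
    exact ⟨mul_nonneg hr0 hx₀, by nlinarith⟩
  · exact Or.inl ⟨x, mem_iInter.1 hx k, rfl⟩

lemma cantorRatio_mul_add_mem_middleCantorSet (hN : N ≠ 0) {x : ℝ} (hx : x ∈ middleCantorSet N) :
    cantorRatio N * x + (1 - cantorRatio N) ∈ middleCantorSet N := by
  refine mem_iInter.2 fun k => ?_
  rcases k with _ | k
  · obtain ⟨hx₀, hx₁⟩ : x ∈ Icc 0 1 := mem_iInter.1 hx 0
    have hr0 := cantorRatio_nonneg N
    have hr1 := cantorRatio_lt_half N
    exact ⟨by nlinarith, by nlinarith⟩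
  · exact Or.inr ⟨x, mem_iInter.1 hx k, by rw [right_offset_eq_one_sub_cantorRatio hN]⟩

end MiddleCantorSet

theorem stmt14 : ∃ N₀ : ℕ, ∀ N : ℕ, N₀ ≤ N →
    ∃ x d : ℝ, 0 < d ∧ x ∈ middleCantorSet N ∧ x + d ∈ middleCantorSet N ∧ x + 2 * d ∈ middleCantorSet N := by
  refine ⟨3, fun N hN => ?_⟩
  have hN0 : N ≠ 0 := by omega
  set r := cantorRatio N
  have hr0 : 0 ≤ r := cantorRatio_nonneg N
  have hr2 : r < 1 / 2 := cantorRatio_lt_half N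
  have hr3 : 1 / 3 ≤ r := one_third_le_cantorRatio hN
  have hbound : |-1 / r| ≤ 2 / (1 - r) := by
    rw [abs_div, abs_neg, abs_one, abs_of_pos (by linarith),
      div_le_div_iff₀ (by linarith) (by linarith)]
    linarith
  obtain ⟨c, hc, hsum⟩ := exists_hasSum_digits_mul_pow (by linarith) (by linarith) hbound
  choose u v w hu hv hw huvw using fun k => exists_bits_add_sub_two_mul_eq (hc k)
  have hu' := forall_mem_Icc_of_forall_mem_pair hu
  have hv' := forall_mem_Icc_of_forall_mem_pair hv
  have hrel := binaryPoint_add_sub_two_mul hr0 (by linarith) hu' hv'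
    (forall_mem_Icc_of_forall_mem_pair hw) (by simpa only [huvw] using hsum)
  have hprog : r * binaryPoint r w + 2 * (r * binaryPoint r v - r * binaryPoint r w) =
      r * binaryPoint r u + (1 - r) := by
    field_simp at hrel
    linear_combination -hrel
  have hV := binaryPoint_mem_Icc hr0 (by linarith) hv'
  have hU := binaryPoint_mem_Icc hr0 (by linarith) hu'
  refine ⟨r * binaryPoint r w, r * binaryPoint r v - r * binaryPoint r w, ?_,
    cantorRatio_mul_mem_middleCantorSet (binaryPoint_mem_middleCantorSet hN0 hw), ?_, ?_⟩
  · nlinarith [hV.2, hU.1]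
  · rw [add_sub_cancel]
    exact cantorRatio_mul_mem_middleCantorSet (binaryPoint_mem_middleCantorSet hN0 hv)
  · rw [hprog]
    exact cantorRatio_mul_add_mem_middleCantorSet hN0 (binaryPoint_mem_middleCantorSet hN0 hu)
end
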